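/- Let a > 0, M ∈ ℕ, and let u, f : ℝ² → ℝ be such that on an open set U ⊆ ℝ², u is M times continuously differentiable, f is (M−2) times continuously differentiable, and a·(∂²u/∂x² + ∂²u/∂y²) = −f on U. Then for every (x*,y*) ∈ U and every (m,n) ∈ ℕ² with m+n ≤ M: (i) if m ≥ 2, then u^(m,n)(x*,y*) = (−1)^⌊m/2⌋ · u^(odd(m), n+m−odd(m))(x*,y*) + (1/a)·∑_{ℓ=1}^{⌊m/2⌋} (−1)^ℓ · f^(m−2ℓ, n+2ℓ−2)(x*,y*); (ii) if n ≥ 2, then u^(m,n)(x*,y*) = (−1)^⌊n/2⌋ · u^(n+m−odd(n), odd(n))(x*,y*) + (1/a)·∑_{ℓ=1}^{⌊n/2⌋} (−1)^ℓ · f^(m+2ℓ−2, n−2ℓ)(x*,y*). -/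

import Mathlib

open Finset

/-- partial derivative in `x`. -/
noncomputable def pdx (v : ℝ → ℝ → ℝ) : ℝ → ℝ → ℝ := fun x y => deriv (fun t => v t y) x
/-- partial derivative in `y`. -/
noncomputable def pdy (v : ℝ → ℝ → ℝ) : ℝ → ℝ → ℝ := fun x y => deriv (fun t => v x t) y
/-- mixed partial derivative `∂^{m+n} v / ∂x^m ∂y^n`. -/
noncomputable def pd (m n : ℕ) (v : ℝ → ℝ → ℝ) : ℝ → ℝ → ℝ := pdx^[m] (pdy^[n] v)

/-!
Differentiating `a Δu = -f` by `∂ₓᵐ ∂ᵧⁿ` on `U` (legitimate because `u` is `C^M` there, so mixed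
partials commute and the derivatives are additive) gives the recurrence
`a (u^(m+2,n) + u^(m,n+2)) = -f^(m,n)` for `m + n + 2 ≤ M`. Unrolling it `⌊m/2⌋` times in the first
index gives (i); (ii) is (i) for the transposed arrays `(m, n) ↦ u^(n,m), f^(n,m)`.
-/

open Function Set Filter

/-- What the argument needs of "linear differential operator of order `k` on `U`". Additivity is
only asked on `U` and for `C^k` functions, since `deriv` takes junk values elsewhere. -/
structure IsLinearDiffOpOn (U : Set (ℝ × ℝ)) (k : ℕ) (D : (ℝ → ℝ → ℝ) → ℝ → ℝ → ℝ) : Prop where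
  congr {v w : ℝ → ℝ → ℝ} :
    EqOn (uncurry v) (uncurry w) U → EqOn (uncurry (D v)) (uncurry (D w)) U
  contDiffOn {K : ℕ} {v : ℝ → ℝ → ℝ} :
    ContDiffOn ℝ (K + k : ℕ) (uncurry v) U → ContDiffOn ℝ K (uncurry (D v)) U
  add {v w : ℝ → ℝ → ℝ} : ContDiffOn ℝ k (uncurry v) U → ContDiffOn ℝ k (uncurry w) U →
    EqOn (uncurry (D (v + w))) (uncurry (D v + D w)) U
  smul (c : ℝ) (v : ℝ → ℝ → ℝ) : D (c • v) = c • D v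

namespace IsLinearDiffOpOn

variable {U : Set (ℝ × ℝ)} {k l : ℕ} {D E : (ℝ → ℝ → ℝ) → ℝ → ℝ → ℝ}

theorem id : IsLinearDiffOpOn U 0 id where
  congr h := h
  contDiffOn h := h
  add _ _ := fun _ _ => rfl
  smul _ _ := rfl

theorem comp (hD : IsLinearDiffOpOn U k D) (hE : IsLinearDiffOpOn U l E) :
    IsLinearDiffOpOn U (k + l) (D ∘ E) where
  congr h := hD.congr (hE.congr h)
  contDiffOn {K} _ hv := hD.contDiffOn (hE.contDiffOn (K := K + k) (by rwa [add_assoc]))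
  add {v w} hv hw := by
    have hEv : ContDiffOn ℝ k (uncurry (E v)) U := hE.contDiffOn hv
    have hEw : ContDiffOn ℝ k (uncurry (E w)) U := hE.contDiffOn hw
    exact (hD.congr (hE.add (hv.of_le (by norm_cast; omega))
      (hw.of_le (by norm_cast; omega)))).trans (hD.add hEv hEw)
  smul c v := by simp only [Function.comp_apply, hE.smul, hD.smul]

theorem iterate (hD : IsLinearDiffOpOn U k D) (n : ℕ) : IsLinearDiffOpOn U (n * k) D^[n] := by
  induction n with
  | zero => simpa using IsLinearDiffOpOn.id
  | succ n ih => rw [Nat.succ_mul, iterate_succ]; exact ih.comp hD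

theorem eqOn_comp_iterate_of_eqOn_comp (hE : IsLinearDiffOpOn U l E)
    (hDE : ∀ v, ContDiffOn ℝ (k + l : ℕ) (uncurry v) U →
      EqOn (uncurry (D (E v))) (uncurry (E (D v))) U)
    (n : ℕ) {v : ℝ → ℝ → ℝ} (hv : ContDiffOn ℝ (k + n * l : ℕ) (uncurry v) U) :
    EqOn (uncurry (D (E^[n] v))) (uncurry (E^[n] (D v))) U := by
  induction n generalizing v with
  | zero => exact fun _ _ => rfl
  | succ n ih =>
    rw [iterate_succ_apply, iterate_succ_apply]
    have hEv : ContDiffOn ℝ (k + n * l : ℕ) (uncurry (E v)) U :=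
      hE.contDiffOn (by rwa [add_assoc, ← Nat.succ_mul])
    exact (ih hEv).trans ((hE.iterate n).congr (hDE v (hv.of_le (by norm_cast; nlinarith))))

end IsLinearDiffOpOn

section PartialDerivatives

variable {U : Set (ℝ × ℝ)} {v : ℝ → ℝ → ℝ} {x y : ℝ}

theorem HasFDerivAt.hasDerivAt_left {E : Type*} [NormedAddCommGroup E] [NormedSpace ℝ E]
    {F : ℝ × ℝ → E} {F' : ℝ × ℝ →L[ℝ] E} (h : HasFDerivAt F F' (x, y)) :
    HasDerivAt (fun t => F (t, y)) (F' (1, 0)) x :=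
  h.comp_hasDerivAt x ((hasDerivAt_id x).prodMk (hasDerivAt_const x y))

theorem HasFDerivAt.hasDerivAt_right {E : Type*} [NormedAddCommGroup E] [NormedSpace ℝ E]
    {F : ℝ × ℝ → E} {F' : ℝ × ℝ →L[ℝ] E} (h : HasFDerivAt F F' (x, y)) :
    HasDerivAt (fun t => F (x, t)) (F' (0, 1)) y :=
  h.comp_hasDerivAt y ((hasDerivAt_const y x).prodMk (hasDerivAt_id y))

theorem pdx_eqOn_fderiv (hU : IsOpen U) (hv : ContDiffOn ℝ 1 (uncurry v) U) :
    EqOn (uncurry (pdx v)) (uncurry fun a b => fderiv ℝ (uncurry v) (a, b) (1, 0)) U :=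
  fun _ hp => ((hv.contDiffAt (hU.mem_nhds hp)).differentiableAt one_ne_zero).hasFDerivAt
    |>.hasDerivAt_left.deriv

theorem pdy_eqOn_fderiv (hU : IsOpen U) (hv : ContDiffOn ℝ 1 (uncurry v) U) :
    EqOn (uncurry (pdy v)) (uncurry fun a b => fderiv ℝ (uncurry v) (a, b) (0, 1)) U :=
  fun _ hp => ((hv.contDiffAt (hU.mem_nhds hp)).differentiableAt one_ne_zero).hasFDerivAt
    |>.hasDerivAt_right.deriv

theorem isLinearDiffOpOn_pdx (hU : IsOpen U) : IsLinearDiffOpOn U 1 pdx where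
  congr {v w} h p hp := EventuallyEq.deriv_eq <| eventually_of_mem
    ((continuous_id.prodMk continuous_const).continuousAt.preimage_mem_nhds (hU.mem_nhds hp))
    fun _ ht => h ht
  contDiffOn {K v} hv :=
    ((ContinuousLinearMap.apply ℝ ℝ ((1 : ℝ), (0 : ℝ))).contDiff.comp_contDiffOn
      (hv.fderiv_of_isOpen hU le_rfl)).congr (pdx_eqOn_fderiv hU (hv.of_le (by simp)))
  add {v w} hv hw := by
    rintro ⟨x, y⟩ hp
    have hdv := ((hv.contDiffAt (hU.mem_nhds hp)).differentiableAt one_ne_zero).hasFDerivAt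
    have hdw := ((hw.contDiffAt (hU.mem_nhds hp)).differentiableAt one_ne_zero).hasFDerivAt
    exact deriv_add hdv.hasDerivAt_left.differentiableAt hdw.hasDerivAt_left.differentiableAt
  smul c v := by ext x y; simp [pdx, deriv_const_mul_field']

theorem isLinearDiffOpOn_pdy (hU : IsOpen U) : IsLinearDiffOpOn U 1 pdy where
  congr {v w} h p hp := EventuallyEq.deriv_eq <| eventually_of_mem
    ((continuous_const.prodMk continuous_id).continuousAt.preimage_mem_nhds (hU.mem_nhds hp))
    fun _ ht => h ht
  contDiffOn {K v} hv :=
    ((ContinuousLinearMap.apply ℝ ℝ ((0 : ℝ), (1 : ℝ))).contDiff.comp_contDiffOn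
      (hv.fderiv_of_isOpen hU le_rfl)).congr (pdy_eqOn_fderiv hU (hv.of_le (by simp)))
  add {v w} hv hw := by
    rintro ⟨x, y⟩ hp
    have hdv := ((hv.contDiffAt (hU.mem_nhds hp)).differentiableAt one_ne_zero).hasFDerivAt
    have hdw := ((hw.contDiffAt (hU.mem_nhds hp)).differentiableAt one_ne_zero).hasFDerivAt
    exact deriv_add hdv.hasDerivAt_right.differentiableAt hdw.hasDerivAt_right.differentiableAt
  smul c v := by ext x y; simp [pdy, deriv_const_mul_field']

theorem pdx_pdy_eq_fderiv_fderiv (hU : IsOpen U) (hv : ContDiffOn ℝ 2 (uncurry v) U)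
    (hp : (x, y) ∈ U) :
    pdx (pdy v) x y = fderiv ℝ (fderiv ℝ (uncurry v)) (x, y) (1, 0) (0, 1) := by
  have hd : DifferentiableAt ℝ (fderiv ℝ (uncurry v)) (x, y) :=
    ((hv.fderiv_of_isOpen hU (by norm_num : (1 : WithTop ℕ∞) + 1 ≤ 2)).contDiffAt
      (hU.mem_nhds hp)).differentiableAt one_ne_zero
  exact ((isLinearDiffOpOn_pdx hU).congr (pdy_eqOn_fderiv hU (hv.of_le one_le_two)) hp).trans
    (((ContinuousLinearMap.apply ℝ ℝ ((0 : ℝ), (1 : ℝ))).hasFDerivAt.comp (x, y)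
      hd.hasFDerivAt).hasDerivAt_left.deriv)

theorem pdy_pdx_eq_fderiv_fderiv (hU : IsOpen U) (hv : ContDiffOn ℝ 2 (uncurry v) U)
    (hp : (x, y) ∈ U) :
    pdy (pdx v) x y = fderiv ℝ (fderiv ℝ (uncurry v)) (x, y) (0, 1) (1, 0) := by
  have hd : DifferentiableAt ℝ (fderiv ℝ (uncurry v)) (x, y) :=
    ((hv.fderiv_of_isOpen hU (by norm_num : (1 : WithTop ℕ∞) + 1 ≤ 2)).contDiffAt
      (hU.mem_nhds hp)).differentiableAt one_ne_zero
  exact ((isLinearDiffOpOn_pdy hU).congr (pdx_eqOn_fderiv hU (hv.of_le one_le_two)) hp).trans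
    (((ContinuousLinearMap.apply ℝ ℝ ((1 : ℝ), (0 : ℝ))).hasFDerivAt.comp (x, y)
      hd.hasFDerivAt).hasDerivAt_right.deriv)

theorem pdx_pdy_eqOn_pdy_pdx (hU : IsOpen U) (hv : ContDiffOn ℝ 2 (uncurry v) U) :
    EqOn (uncurry (pdx (pdy v))) (uncurry (pdy (pdx v))) U := by
  rintro ⟨x, y⟩ hp
  rw [uncurry_apply_pair, uncurry_apply_pair, pdx_pdy_eq_fderiv_fderiv hU hv hp,
    pdy_pdx_eq_fderiv_fderiv hU hv hp,
    (hv.contDiffAt (hU.mem_nhds hp)).isSymmSndFDerivAt (by simp)]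

theorem isLinearDiffOpOn_pd (hU : IsOpen U) (m n : ℕ) : IsLinearDiffOpOn U (m + n) (pd m n) := by
  have h := ((isLinearDiffOpOn_pdx hU).iterate m).comp ((isLinearDiffOpOn_pdy hU).iterate n)
  rwa [mul_one, mul_one] at h

theorem pd_eqOn_pdy_iterate_pdx_iterate (hU : IsOpen U) (m n : ℕ)
    (hv : ContDiffOn ℝ (m + n : ℕ) (uncurry v) U) :
    EqOn (uncurry (pd m n v)) (uncurry (pdy^[n] (pdx^[m] v))) U := by
  have hy_xm : ∀ w : ℝ → ℝ → ℝ, ContDiffOn ℝ (1 + m * 1 : ℕ) (uncurry w) U →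
      EqOn (uncurry (pdy (pdx^[m] w))) (uncurry (pdx^[m] (pdy w))) U :=
    fun w hw => (isLinearDiffOpOn_pdx hU).eqOn_comp_iterate_of_eqOn_comp
      (fun w' hw' => (pdx_pdy_eqOn_pdy_pdx hU hw').symm) m hw
  exact (isLinearDiffOpOn_pdy hU).eqOn_comp_iterate_of_eqOn_comp
    (fun w hw => (hy_xm w (by rwa [add_comm, mul_one])).symm) n (by rwa [mul_one])

end PartialDerivatives

theorem eq_neg_one_pow_mul_add_sum_of_recurrence {g h : ℕ → ℕ → ℝ} {c : ℝ} {M : ℕ}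
    (hrec : ∀ m n, m + n + 2 ≤ M → g (m + 2) n + g m (n + 2) = -(c * h m n))
    {m n : ℕ} (hmn : m + n ≤ M) {j : ℕ} (hj : 2 * j ≤ m) :
    g m n = (-1) ^ j * g (m - 2 * j) (n + 2 * j)
      + c * ∑ l ∈ Icc 1 j, (-1) ^ l * h (m - 2 * l) (n + 2 * l - 2) := by
  induction j with
  | zero => simp
  | succ j ih =>
    have hstep := hrec (m - 2 * (j + 1)) (n + 2 * j) (by omega)
    rw [show m - 2 * (j + 1) + 2 = m - 2 * j by omega,
      show n + 2 * j + 2 = n + 2 * (j + 1) by ring] at hstep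
    rw [ih (by omega), sum_Icc_succ_top (by omega), show n + 2 * (j + 1) - 2 = n + 2 * j by omega]
    linear_combination (-1 : ℝ) ^ j * hstep

theorem eq_closed_form_of_recurrence {g h : ℕ → ℕ → ℝ} {c : ℝ} {M : ℕ}
    (hrec : ∀ m n, m + n + 2 ≤ M → g (m + 2) n + g m (n + 2) = -(c * h m n))
    {m n : ℕ} (hmn : m + n ≤ M) :
    g m n = (-1) ^ (m / 2) * g (m % 2) (n + m - m % 2)
      + c * ∑ l ∈ Icc 1 (m / 2), (-1) ^ l * h (m - 2 * l) (n + 2 * l - 2) := by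
  rw [eq_neg_one_pow_mul_add_sum_of_recurrence hrec hmn (Nat.mul_div_le m 2),
    show m - 2 * (m / 2) = m % 2 by omega, show n + 2 * (m / 2) = n + m - m % 2 by omega]

theorem laplace_pd_eq_of_laplace_eq {U : Set (ℝ × ℝ)} (hU : IsOpen U) {a : ℝ} {u f : ℝ → ℝ → ℝ}
    {m n : ℕ} (hu : ContDiffOn ℝ (m + n + 2 : ℕ) (uncurry u) U)
    (hpde : ∀ p ∈ U, a * (pd 2 0 u p.1 p.2 + pd 0 2 u p.1 p.2) = - f p.1 p.2) :
    ∀ p ∈ U, a * (pd (m + 2) n u p.1 p.2 + pd m (n + 2) u p.1 p.2) = - pd m n f p.1 p.2 := by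
  intro p hp
  have hP := isLinearDiffOpOn_pd hU m n
  have hpde' : EqOn (uncurry (a • (pd 2 0 u + pd 0 2 u))) (uncurry ((-1 : ℝ) • f)) U :=
    fun q hq => (hpde q hq).trans (neg_eq_neg_one_mul _)
  have hxx : ContDiffOn ℝ (m + n : ℕ) (uncurry (pd 2 0 u)) U :=
    (isLinearDiffOpOn_pd hU 2 0).contDiffOn (by rwa [add_assoc])
  have hyy : ContDiffOn ℝ (m + n : ℕ) (uncurry (pd 0 2 u)) U :=
    (isLinearDiffOpOn_pd hU 0 2).contDiffOn (by rwa [add_assoc])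
  have hcomm : pd (m + 2) n u p.1 p.2 = pd m n (pd 2 0 u) p.1 p.2 := by
    rw [pd, iterate_add_apply]
    exact ((isLinearDiffOpOn_pdx hU).iterate m).congr
      (pd_eqOn_pdy_iterate_pdx_iterate hU 2 n (hu.of_le (by norm_cast; omega))) hp
  have hdiff : a * pd m n (pd 2 0 u + pd 0 2 u) p.1 p.2 = -1 * pd m n f p.1 p.2 := by
    have h := hP.congr hpde' hp
    rwa [hP.smul, hP.smul] at h
  have hsum : pd m n (pd 2 0 u + pd 0 2 u) p.1 p.2
      = pd m n (pd 2 0 u) p.1 p.2 + pd m n (pd 0 2 u) p.1 p.2 :=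
    hP.add hxx hyy hp
  rw [hcomm, show pd m (n + 2) u = pd m n (pd 0 2 u) from rfl, ← hsum, hdiff, neg_one_mul]

theorem stmt11
    (a : ℝ) (ha : 0 < a) (M : ℕ) (u f : ℝ → ℝ → ℝ)
    (U : Set (ℝ × ℝ)) (hU : IsOpen U)
    (hu : ContDiffOn ℝ M (Function.uncurry u) U)
    (hpde : ∀ p ∈ U, a * (pd 2 0 u p.1 p.2 + pd 0 2 u p.1 p.2) = - f p.1 p.2) :
    ∀ x y : ℝ, (x, y) ∈ U → ∀ m n : ℕ, m + n ≤ M →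
      (2 ≤ m →
        pd m n u x y = (-1 : ℝ) ^ (m / 2) * pd (m % 2) (n + m - m % 2) u x y
          + (1 / a) * ∑ l ∈ Finset.Icc 1 (m / 2),
              (-1 : ℝ) ^ l * pd (m - 2 * l) (n + 2 * l - 2) f x y) ∧
      (2 ≤ n →
        pd m n u x y = (-1 : ℝ) ^ (n / 2) * pd (n + m - n % 2) (n % 2) u x y
          + (1 / a) * ∑ l ∈ Finset.Icc 1 (n / 2),
              (-1 : ℝ) ^ l * pd (m + 2 * l - 2) (n - 2 * l) f x y) := by
  intro x y hxy m n hmn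
  have hrec (i j : ℕ) (hij : i + j + 2 ≤ M) :
      pd (i + 2) j u x y + pd i (j + 2) u x y = -(1 / a * pd i j f x y) := by
    have h := laplace_pd_eq_of_laplace_eq hU (hu.of_le (by exact_mod_cast hij)) hpde (x, y) hxy
    field_simp
    linarith
  refine ⟨fun _ => eq_closed_form_of_recurrence (g := fun i j => pd i j u x y)
    (h := fun i j => pd i j f x y) hrec hmn, fun _ => ?_⟩
  rw [add_comm n m]
  exact eq_closed_form_of_recurrence (M := M) (g := fun i j => pd j i u x y)
    (h := fun i j => pd j i f x y) (fun i j hij => by rw [add_comm]; exact hrec j i (by omega))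
    (by omega)
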